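/- Let q be a prime power, let M ≥ 1 and n_v ≥ 1 be integers, let b_1, …, b_{n_v} be nonnegative integers with b_j ≥ 1 for a fixed index j, let d = ∑_{j′=1}^{n_v} b_{j′}, and let h = (h_0, …, h_M) and h′ = (h′_0, …, h′_M) be probability vectors with h′ ⪯ h. Define g_j(x, h) = 1 − ∑_{r=1}^M h_r ∑_{s=0}^{min(d−1, r−1)} Ω(j, s, x) ζ_{s+1}^r. Then for every x ∈ (0,1]^{n_v}, g_j(x, h) ≤ g_j(x, h′). -/

import Mathlib

/-- `ζ_r^m = ∏_{i=0}^{r-1} (1 - q^{-m+i})`. -/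
noncomputable def zeta (q r m : ℕ) : ℝ :=
  ∏ i ∈ Finset.range r, (1 - (q : ℝ) ^ ((i : ℤ) - (m : ℤ)))

/-- `Ω(j, s, x)`: the probability that `s` of the `d−1` incoming messages of a batch check
node are erased (see the paper, eq. (7)). -/
noncomputable def OmegaBCN {nv : ℕ} (b : Fin nv → ℕ) (j : Fin nv) (s : ℕ)
    (x : Fin nv → ℝ) : ℝ :=
  ∑ k : (∀ t : Fin nv, Fin ((if t = j then b t - 1 else b t) + 1)),
    if (∑ t, ((k t : ℕ))) = s then
      ∏ t, ((Nat.choose (if t = j then b t - 1 else b t) (k t : ℕ) : ℝ) *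
        x t ^ (k t : ℕ) * (1 - x t) ^ ((if t = j then b t - 1 else b t) - (k t : ℕ)))
    else 0

/-- The exact batch-check-node update function of density evolution:
`g_j(x, h) = 1 − ∑_{r=1}^M h_r ∑_{s=0}^{min(d−1,r−1)} Ω(j,s,x) ζ_{s+1}^r`,
where `d = ∑_{j′} b_{j′}`. -/
noncomputable def gBCN (q M : ℕ) {nv : ℕ} (b : Fin nv → ℕ) (j : Fin nv)
    (h : ℕ → ℝ) (x : Fin nv → ℝ) : ℝ :=
  1 - ∑ r ∈ Finset.Icc 1 M, h r *
    ∑ s ∈ Finset.range (min ((∑ j', b j') - 1) (r - 1) + 1),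
      OmegaBCN b j s x * zeta q (s + 1) r

lemma zeta_nonneg' {q : ℕ} (hq : (1:ℝ) ≤ q) {r m : ℕ} (h : r ≤ m) :
    0 ≤ zeta q r m := by
  apply Finset.prod_nonneg
  intro i hi
  simp only [Finset.mem_range] at hi
  have h1 : (q:ℝ) ^ ((i:ℤ) - m) ≤ (q:ℝ) ^ (0:ℤ) := by
    apply zpow_le_zpow_right₀ hq
    omega
  simp at h1; linarith

lemma zeta_mono' {q : ℕ} (hq : (1:ℝ) ≤ q) {r m m' : ℕ} (h : r ≤ m) (h' : m ≤ m') :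
    zeta q r m ≤ zeta q r m' := by
  apply Finset.prod_le_prod
  · intro i hi
    simp only [Finset.mem_range] at hi
    have h1 : (q:ℝ) ^ ((i:ℤ) - m) ≤ (q:ℝ) ^ (0:ℤ) := by
      apply zpow_le_zpow_right₀ hq; omega
    simp at h1; linarith
  · intro i hi
    simp only [Finset.mem_range] at hi
    have h1 : (q:ℝ) ^ ((i:ℤ) - m') ≤ (q:ℝ) ^ ((i:ℤ) - m) := by
      apply zpow_le_zpow_right₀ hq; omega
    linarith

lemma omega_nonneg' {nv : ℕ} (b : Fin nv → ℕ) (j : Fin nv) (s : ℕ)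
    (x : Fin nv → ℝ) (hx : ∀ t, 0 < x t ∧ x t ≤ 1) :
    0 ≤ OmegaBCN b j s x := by
  apply Finset.sum_nonneg
  intro k _
  split
  · apply Finset.prod_nonneg
    intro t _
    have h1 := (hx t).1
    have h2 := (hx t).2
    apply mul_nonneg (mul_nonneg (by positivity) (by positivity))
    apply pow_nonneg; linarith
  · exact le_rfl

/-- For probability vectors `h′ ⪯ h`
(i.e. `∑_{i=k}^M h′_i ≤ ∑_{i=k}^M h_i` for every `k`), the exact batch-check-node update
satisfies `g_j(x, h) ≤ g_j(x, h′)` for every `x ∈ (0,1]^{n_v}`. -/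
theorem gBCN_monotone_in_h
    (q M nv : ℕ) (hq : IsPrimePow q) (hM : 1 ≤ M) (hnv : 1 ≤ nv)
    (b : Fin nv → ℕ) (j : Fin nv) (hbj : 1 ≤ b j)
    (h h' : ℕ → ℝ)
    (hpos : ∀ r, r ≤ M → 0 ≤ h r) (hsum : ∑ r ∈ Finset.range (M + 1), h r = 1)
    (hpos' : ∀ r, r ≤ M → 0 ≤ h' r) (hsum' : ∑ r ∈ Finset.range (M + 1), h' r = 1)
    (hdom : ∀ k, k ≤ M → ∑ i ∈ Finset.Icc k M, h' i ≤ ∑ i ∈ Finset.Icc k M, h i)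
    (x : Fin nv → ℝ) (hx : ∀ t, 0 < x t ∧ x t ≤ 1) :
    gBCN q M b j h x ≤ gBCN q M b j h' x := by
  have hq1 : (1:ℝ) ≤ q := by exact_mod_cast hq.one_lt.le
  set d : ℕ := ∑ j', b j' with hd
  set F : ℕ → ℝ := fun r =>
    ∑ s ∈ Finset.range (min (d - 1) (r - 1) + 1), OmegaBCN b j s x * zeta q (s + 1) r
    with hF
  have hOm : ∀ s, 0 ≤ OmegaBCN b j s x := fun s => omega_nonneg' b j s x hx
  -- term nonnegativity
  have hFnn : ∀ r, 1 ≤ r → 0 ≤ F r := by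
    intro r hr
    apply Finset.sum_nonneg
    intro s hs
    simp only [Finset.mem_range] at hs
    exact mul_nonneg (hOm s) (zeta_nonneg' hq1 (by omega))
  -- monotonicity of F
  have hFmono : ∀ k, 2 ≤ k → F (k - 1) ≤ F k := by
    intro k hk
    have h1 : k - 1 - 1 = k - 2 := by omega
    calc F (k - 1)
        = ∑ s ∈ Finset.range (min (d - 1) (k - 2) + 1),
            OmegaBCN b j s x * zeta q (s + 1) (k - 1) := by rw [hF]; simp [h1]
      _ ≤ ∑ s ∈ Finset.range (min (d - 1) (k - 2) + 1),
            OmegaBCN b j s x * zeta q (s + 1) k := by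
          apply Finset.sum_le_sum
          intro s hs
          simp only [Finset.mem_range] at hs
          exact mul_le_mul_of_nonneg_left (zeta_mono' hq1 (by omega) (by omega)) (hOm s)
      _ ≤ F k := by
          apply Finset.sum_le_sum_of_subset_of_nonneg
          · apply Finset.range_subset_range.mpr; omega
          · intro s hs _
            simp only [Finset.mem_range] at hs
            exact mul_nonneg (hOm s) (zeta_nonneg' hq1 (by omega))
  set D : ℕ → ℝ := fun k => if k = 1 then F 1 else F k - F (k - 1) with hDdef
  have hD : ∀ k, 1 ≤ k → 0 ≤ D k := by
    intro k hk
    by_cases hk1 : k = 1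
    · simp [hDdef, hk1]; exact hFnn 1 le_rfl
    · simp only [hDdef, if_neg hk1]
      have := hFmono k (by omega)
      linarith
  have htel : ∀ r, 1 ≤ r → F r = ∑ k ∈ Finset.Icc 1 r, D k := by
    intro r hr
    induction r, hr using Nat.le_induction with
    | base => simp [hDdef]
    | succ n hn ih =>
      rw [Finset.sum_Icc_succ_top (by omega), ← ih]
      have hDn : D (n + 1) = F (n + 1) - F n := by
        simp only [hDdef, if_neg (by omega : ¬ n + 1 = 1)]
        congr 1
      rw [hDn]; ring
  have key : ∀ (g : ℕ → ℝ),
      ∑ r ∈ Finset.Icc 1 M, g r * F r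
        = ∑ k ∈ Finset.Icc 1 M, D k * ∑ r ∈ Finset.Icc k M, g r := by
    intro g
    calc ∑ r ∈ Finset.Icc 1 M, g r * F r
        = ∑ r ∈ Finset.Icc 1 M, ∑ k ∈ Finset.Icc 1 M,
            (if k ≤ r then g r * D k else 0) := by
          apply Finset.sum_congr rfl
          intro r hr
          simp only [Finset.mem_Icc] at hr
          rw [htel r hr.1, Finset.mul_sum, ← Finset.sum_filter]
          apply Finset.sum_congr
          · ext k
            simp only [Finset.mem_Icc, Finset.mem_filter]
            omega
          · intros; rfl
      _ = ∑ k ∈ Finset.Icc 1 M, ∑ r ∈ Finset.Icc 1 M,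
            (if k ≤ r then g r * D k else 0) := Finset.sum_comm
      _ = ∑ k ∈ Finset.Icc 1 M, D k * ∑ r ∈ Finset.Icc k M, g r := by
          apply Finset.sum_congr rfl
          intro k hk
          simp only [Finset.mem_Icc] at hk
          rw [← Finset.sum_filter, Finset.mul_sum]
          apply Finset.sum_congr
          · ext r
            simp only [Finset.mem_Icc, Finset.mem_filter]
            omega
          · intros; ring
  show (1 : ℝ) - ∑ r ∈ Finset.Icc 1 M, h r * F r ≤ 1 - ∑ r ∈ Finset.Icc 1 M, h' r * F r
  apply sub_le_sub_left
  rw [key h, key h']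
  apply Finset.sum_le_sum
  intro k hk
  simp only [Finset.mem_Icc] at hk
  exact mul_le_mul_of_nonneg_left (hdom k hk.2) (hD k hk.1)
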